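/- arXiv:math/0511502 — 2 statements merged into one kernel-verified Lean document; each statement's English description precedes it below -/
import Mathlib

section
/- Let H be a real inner product space, let Y ∈ H with Y ≠ 0, let Γ be a nonempty set, and let l : Γ → H satisfy l(γ) ≠ 0 for all γ ∈ Γ. Define L = (⨅_{(a,γ) ∈ ℝ × Γ} ‖Y − a • l(γ)‖²) / ‖Y‖². Then L = 1 − sup_{γ ∈ Γ} ⟨l(γ)/‖l(γ)‖, Y/‖Y‖⟩², where the supremum is the supremum of the (bounded, nonempty) set {⟨l(γ)/‖l(γ)‖, Y/‖Y‖⟩² : γ ∈ Γ} ⊆ [0, 1]. -/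
open scoped RealInnerProductSpace

/-- **Profiled likelihood-ratio statistic in nonlinear regression.**
For `Y ≠ 0` and a family `l : Γ → H` of nonzero vectors in a real inner product space,
the statistic `L = (inf_{(a,γ)} ‖Y - a • l(γ)‖²)/‖Y‖²` equals
`1 - sup_γ ⟨l(γ)/‖l(γ)‖, Y/‖Y‖⟩²`. -/
theorem nonlinear_regression_lr_statistic
    (H : Type*) [NormedAddCommGroup H] [InnerProductSpace ℝ H]
    (Y : H) (hY : Y ≠ 0)
    (Γ : Type*) [Nonempty Γ]
    (l : Γ → H) (hl : ∀ γ : Γ, l γ ≠ 0)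
    (L : ℝ) (hL : L = (⨅ p : ℝ × Γ, ‖Y - p.1 • l p.2‖ ^ 2) / ‖Y‖ ^ 2) :
    L = 1 - ⨆ γ : Γ, ⟪(‖l γ‖⁻¹) • l γ, (‖Y‖⁻¹) • Y⟫ ^ 2 := by
  have hYn : ‖Y‖ ≠ 0 := norm_ne_zero_iff.mpr hY
  have hY2 : (0:ℝ) < ‖Y‖ ^ 2 := by positivity
  set f : Γ → ℝ := fun γ => ⟪(‖l γ‖⁻¹) • l γ, (‖Y‖⁻¹) • Y⟫ ^ 2 with hf
  set g : ℝ × Γ → ℝ := fun p => ‖Y - p.1 • l p.2‖ ^ 2 with hg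
  have hln : ∀ γ, ‖l γ‖ ≠ 0 := fun γ => norm_ne_zero_iff.mpr (hl γ)
  have hlpos : ∀ γ, (0:ℝ) < ‖l γ‖ ^ 2 := fun γ => by
    have := hln γ; positivity
  have hfval : ∀ γ, f γ = ⟪l γ, Y⟫ ^ 2 / (‖l γ‖ ^ 2 * ‖Y‖ ^ 2) := by
    intro γ
    simp only [hf, real_inner_smul_left, real_inner_smul_right]
    field_simp
  have hkey : ∀ (a : ℝ) (γ : Γ),
      g (a, γ) = ‖Y‖ ^ 2 - 2 * a * ⟪l γ, Y⟫ + a ^ 2 * ‖l γ‖ ^ 2 := by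
    intro a γ
    simp only [hg]
    rw [norm_sub_sq_real, real_inner_smul_right, norm_smul, mul_pow,
      Real.norm_eq_abs, sq_abs, real_inner_comm Y (l γ)]
    ring
  -- f γ ≤ 1
  have hf1 : ∀ γ, f γ ≤ 1 := by
    intro γ
    have hu : ‖(‖l γ‖⁻¹) • l γ‖ = 1 := by
      rw [norm_smul, norm_inv, norm_norm, inv_mul_cancel₀ (hln γ)]
    have hv : ‖(‖Y‖⁻¹) • Y‖ = 1 := by
      rw [norm_smul, norm_inv, norm_norm, inv_mul_cancel₀ hYn]
    have := abs_real_inner_le_norm ((‖l γ‖⁻¹) • l γ) ((‖Y‖⁻¹) • Y)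
    rw [hu, hv, mul_one] at this
    calc f γ = |⟪(‖l γ‖⁻¹) • l γ, (‖Y‖⁻¹) • Y⟫| ^ 2 := by rw [sq_abs]
    _ ≤ 1 ^ 2 := pow_le_pow_left₀ (abs_nonneg _) this 2
    _ = 1 := one_pow 2
  have hbddf : BddAbove (Set.range f) := ⟨1, by rintro _ ⟨γ, rfl⟩; exact hf1 γ⟩
  have hbddg : BddBelow (Set.range g) := ⟨0, by rintro _ ⟨p, rfl⟩; positivity⟩
  set S : ℝ := ⨆ γ, f γ with hS
  set I : ℝ := ⨅ p : ℝ × Γ, g p with hI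
  -- pointwise lower bound: g (a, γ) ≥ ‖Y‖² (1 - f γ)
  have hptlow : ∀ (a : ℝ) (γ : Γ), ‖Y‖ ^ 2 * (1 - f γ) ≤ g (a, γ) := by
    intro a γ
    rw [hkey, hfval]
    have hn := hlpos γ
    have h2 : ‖Y‖ ^ 2 * (1 - ⟪l γ, Y⟫ ^ 2 / (‖l γ‖ ^ 2 * ‖Y‖ ^ 2))
        = ‖Y‖ ^ 2 - ⟪l γ, Y⟫ ^ 2 / ‖l γ‖ ^ 2 := by
      field_simp
    rw [h2]
    have h3 : ‖Y‖ ^ 2 - 2 * a * ⟪l γ, Y⟫ + a ^ 2 * ‖l γ‖ ^ 2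
        = ‖Y‖ ^ 2 - (2 * a * ⟪l γ, Y⟫ - a ^ 2 * ‖l γ‖ ^ 2) := by ring
    rw [h3, sub_le_sub_iff_left, le_div_iff₀ hn]
    nlinarith [sq_nonneg (a * ‖l γ‖ ^ 2 - ⟪l γ, Y⟫)]
  -- attained value: g (⟪l γ,Y⟫/‖l γ‖², γ) = ‖Y‖² (1 - f γ)
  have hpteq : ∀ γ : Γ, g (⟪l γ, Y⟫ / ‖l γ‖ ^ 2, γ) = ‖Y‖ ^ 2 * (1 - f γ) := by
    intro γ
    rw [hkey, hfval]
    have hne : ‖l γ‖ ^ 2 ≠ 0 := ne_of_gt (hlpos γ)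
    field_simp
    ring
  have main : I = ‖Y‖ ^ 2 * (1 - S) := by
    apply le_antisymm
    · -- I ≤ ‖Y‖²(1 - S), via S ≤ 1 - I/‖Y‖²
      have hSle : S ≤ 1 - I / ‖Y‖ ^ 2 := by
        apply ciSup_le
        intro γ
        have h1 : I ≤ g (⟪l γ, Y⟫ / ‖l γ‖ ^ 2, γ) := ciInf_le hbddg _
        rw [hpteq γ] at h1
        have h2 : I / ‖Y‖ ^ 2 ≤ 1 - f γ := by
          rw [div_le_iff₀ hY2]; nlinarith
        linarith
      have h3 : I / ‖Y‖ ^ 2 ≤ 1 - S := by linarith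
      rw [div_le_iff₀ hY2] at h3
      linarith [mul_comm (1 - S) (‖Y‖ ^ 2)]
    · apply le_ciInf
      intro p
      have h1 : f p.2 ≤ S := le_ciSup hbddf p.2
      calc ‖Y‖ ^ 2 * (1 - S) ≤ ‖Y‖ ^ 2 * (1 - f p.2) := by nlinarith
      _ ≤ g p := hptlow p.1 p.2
  rw [hL]
  show I / ‖Y‖ ^ 2 = 1 - S
  rw [main]
  field_simp
end

section
/- Let H be a real inner product space, let Y ∈ H with Y ≠ 0, let Γ be a nonempty set, let l : Γ → H satisfy l(γ) ≠ 0 for all γ ∈ Γ, define L = (⨅_{(a,γ) ∈ ℝ × Γ} ‖Y − a • l(γ)‖²) / ‖Y‖², and let w > 0. Then L ≤ 1 − w² if and only if sup_{γ ∈ Γ} |⟨l(γ)/‖l(γ)‖, Y/‖Y‖⟩| ≥ w (supremum of a nonempty set bounded above by 1). -/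
open scoped RealInnerProductSpace

/-- **Rejection region of the likelihood ratio test in nonlinear regression.**
With `L = (inf_{(a,γ)} ‖Y - a • l(γ)‖²)/‖Y‖²` and `w > 0`, one has `L ≤ 1 - w²` if and
only if `sup_γ |⟨l(γ)/‖l(γ)‖, Y/‖Y‖⟩| ≥ w`. -/
theorem nonlinear_regression_rejection_iff
    (H : Type*) [NormedAddCommGroup H] [InnerProductSpace ℝ H]
    (Y : H) (hY : Y ≠ 0)
    (Γ : Type*) [Nonempty Γ]
    (l : Γ → H) (hl : ∀ γ : Γ, l γ ≠ 0)
    (L : ℝ) (hL : L = (⨅ p : ℝ × Γ, ‖Y - p.1 • l p.2‖ ^ 2) / ‖Y‖ ^ 2)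
    (w : ℝ) (hw : 0 < w) :
    L ≤ 1 - w ^ 2 ↔ w ≤ ⨆ γ : Γ, |⟪(‖l γ‖⁻¹) • l γ, (‖Y‖⁻¹) • Y⟫| := by
  have hYn : (0:ℝ) < ‖Y‖ := norm_pos_iff.mpr hY
  have hln : ∀ γ, (0:ℝ) < ‖l γ‖ := fun γ => norm_pos_iff.mpr (hl γ)
  set c : Γ → ℝ := fun γ => |⟪(‖l γ‖⁻¹) • l γ, (‖Y‖⁻¹) • Y⟫| with hc
  have hc0 : ∀ γ, 0 ≤ c γ := fun γ => abs_nonneg _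
  have hc1 : ∀ γ, c γ ≤ 1 := by
    intro γ
    have h := abs_real_inner_le_norm ((‖l γ‖⁻¹) • l γ) ((‖Y‖⁻¹) • Y)
    simpa [norm_smul, abs_inv, abs_norm, inv_mul_cancel₀ (hln γ).ne',
      inv_mul_cancel₀ hYn.ne'] using h
  have hbdd : BddAbove (Set.range c) := ⟨1, by rintro _ ⟨γ, rfl⟩; exact hc1 γ⟩
  set S : ℝ := ⨆ γ, c γ with hS
  have hcS : ∀ γ, c γ ≤ S := fun γ => le_ciSup hbdd γ
  have hS0 : 0 ≤ S := le_trans (hc0 (Classical.arbitrary Γ)) (hcS _)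
  -- c γ squared formula
  have hcsq : ∀ γ, (c γ) ^ 2 * (‖l γ‖ ^ 2 * ‖Y‖ ^ 2) = ⟪l γ, Y⟫ ^ 2 := by
    intro γ
    have h : c γ = |⟪l γ, Y⟫| * (‖l γ‖⁻¹ * ‖Y‖⁻¹) := by
      simp [hc, real_inner_smul_left, real_inner_smul_right, abs_mul, abs_inv,
        abs_norm, mul_comm, mul_left_comm]
      try ring
    rw [h, mul_pow, sq_abs, mul_pow]
    field_simp [(hln γ).ne', hYn.ne']
    try ring
  have expand : ∀ (γ : Γ) (a : ℝ), ‖Y - a • l γ‖ ^ 2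
      = ‖Y‖ ^ 2 - 2 * a * ⟪l γ, Y⟫ + a ^ 2 * ‖l γ‖ ^ 2 := by
    intro γ a
    rw [norm_sub_sq_real, real_inner_smul_right, norm_smul, real_inner_comm]
    simp [mul_pow, sq_abs]
    ring
  have hkey : ∀ (γ : Γ) (a : ℝ),
      ‖Y‖ ^ 2 * (1 - (c γ) ^ 2) ≤ ‖Y - a • l γ‖ ^ 2 := by
    intro γ a
    rw [expand γ a]
    have h1 := hcsq γ
    have h2 := hln γ
    have h3 : 0 ≤ (a * ‖l γ‖ - ⟪l γ, Y⟫ / ‖l γ‖) ^ 2 := sq_nonneg _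
    have h4 : (a * ‖l γ‖ - ⟪l γ, Y⟫ / ‖l γ‖) ^ 2
        = a ^ 2 * ‖l γ‖ ^ 2 - 2 * a * ⟪l γ, Y⟫ + ⟪l γ, Y⟫ ^ 2 / ‖l γ‖ ^ 2 := by
      field_simp; ring
    nlinarith [sq_nonneg (a * ‖l γ‖ ^ 2 - ⟪l γ, Y⟫), h1, pow_pos h2 2,
      mul_pos (pow_pos h2 2) (pow_pos hYn 2)]
  have hkeyeq : ∀ γ : Γ, ‖Y - (⟪l γ, Y⟫ / ‖l γ‖ ^ 2) • l γ‖ ^ 2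
      = ‖Y‖ ^ 2 * (1 - (c γ) ^ 2) := by
    intro γ
    rw [expand]
    have h1 := hcsq γ
    have h2 := (hln γ).ne'
    field_simp
    nlinarith [h1]
  have hbddb : BddBelow (Set.range fun p : ℝ × Γ => ‖Y - p.1 • l p.2‖ ^ 2) :=
    ⟨0, by rintro _ ⟨p, rfl⟩; positivity⟩
  set I : ℝ := ⨅ p : ℝ × Γ, ‖Y - p.1 • l p.2‖ ^ 2 with hI
  have hlow : ‖Y‖ ^ 2 * (1 - S ^ 2) ≤ I := by
    refine le_ciInf fun p => le_trans ?_ (hkey p.2 p.1)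
    have h := hcS p.2
    nlinarith [pow_le_pow_left₀ (hc0 p.2) h 2, sq_nonneg ‖Y‖]
  have hup : I ≤ ‖Y‖ ^ 2 * (1 - S ^ 2) := by
    set r : ℝ := (‖Y‖ ^ 2 - I) / ‖Y‖ ^ 2 with hr
    have hIc : ∀ γ, I ≤ ‖Y‖ ^ 2 * (1 - (c γ) ^ 2) := by
      intro γ
      rw [← hkeyeq γ]
      exact ciInf_le hbddb (⟪l γ, Y⟫ / ‖l γ‖ ^ 2, γ)
    have hcr : ∀ γ, (c γ) ^ 2 ≤ r := by
      intro γ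
      rw [hr, le_div_iff₀ (by positivity : (0:ℝ) < ‖Y‖ ^ 2)]
      nlinarith [hIc γ]
    have hr0 : 0 ≤ r := le_trans (sq_nonneg _) (hcr (Classical.arbitrary Γ))
    have hSr : S ≤ Real.sqrt r := by
      refine ciSup_le fun γ => ?_
      exact (Real.le_sqrt (hc0 γ) hr0).mpr (hcr γ)
    have hS2 : S ^ 2 ≤ r := by
      calc S ^ 2 ≤ Real.sqrt r ^ 2 := by
            exact pow_le_pow_left₀ hS0 hSr 2
        _ = r := Real.sq_sqrt hr0
    rw [hr, le_div_iff₀ (by positivity : (0:ℝ) < ‖Y‖ ^ 2)] at hS2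
    nlinarith
  have hIS : I = ‖Y‖ ^ 2 * (1 - S ^ 2) := le_antisymm hup hlow
  have hLval : L = 1 - S ^ 2 := by
    rw [hL, hIS]
    field_simp
  rw [hLval]
  constructor
  · intro h
    have hwS : w ^ 2 ≤ S ^ 2 := by nlinarith
    nlinarith [hS0, hw.le]
  · intro h
    nlinarith [hw.le]
end
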